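/- arXiv:1711.05975 — 3 statements merged into one kernel-verified Lean document; each statement's English description precedes it below -/
import Mathlib

section
/- Consider a finite directed graph D on vertex set X ∪ {u}, where u is a distinguished input vertex. Let B be the bipartite graph with left vertices X' = {x' : x ∈ X}, right vertices X ∪ {u}, and an edge (y', z) whenever D has a directed edge from z to y, for z ∈ X ∪ {u}. Suppose M is a perfect matching of B (saturating X') that contains an edge (p', u) for some p ∈ X. Then the unique right vertex of X ∪ {u} not covered by M is reachable in D from u along directed edges whose reversals correspond to edges of M. -/
/-!
Counting shows that `M` covers every right vertex except `w`. So every `z ≠ w` has a step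
`z → inl x` with `(x, z) ∈ M`; these steps never enter `u`, and distinct `z` give distinct `x`.
If `w` were unreachable from `u`, these steps would map the finite set of vertices reachable
from `u` injectively into itself minus `u`, which is impossible.
-/

def IsMatching {V W : Type*} (M : Finset (V × W)) : Prop :=
  (∀ e ∈ M, ∀ f ∈ M, (e : V × W).1 = (f : V × W).1 → e = f) ∧
  (∀ e ∈ M, ∀ f ∈ M, (e : V × W).2 = (f : V × W).2 → e = f)

theorem Relation.reflTransGen_of_leftUnique {V : Type*} [Finite V] {R : V → V → Prop}
    {u w : V} (hstep : ∀ z ≠ w, ∃ y ≠ u, R z y) (hR : Relator.LeftUnique R) :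
    Relation.ReflTransGen R u w := by
  classical
  have := Fintype.ofFinite V
  choose! g hgu hg using hstep
  by_contra hw
  set S := Finset.univ.filter (Relation.ReflTransGen R u)
  have huS : u ∈ S := by simp [S, Relation.ReflTransGen.refl]
  have hne : ∀ z ∈ S, z ≠ w := by
    rintro z hz rfl
    exact hw (Finset.mem_filter.mp hz).2
  have hmaps : ∀ z ∈ S, g z ∈ S.erase u := fun z hz =>
    Finset.mem_erase.mpr ⟨hgu z (hne z hz), Finset.mem_filter.mpr
      ⟨Finset.mem_univ _, (Finset.mem_filter.mp hz).2.tail (hg z (hne z hz))⟩⟩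
  have hcard := Finset.card_le_card_of_injOn g hmaps fun z hz z' hz' h =>
    hR (hg z (hne z hz)) (h ▸ hg z' (hne z' hz'))
  rw [Finset.card_erase_of_mem huS] at hcard
  have := Finset.card_pos.mpr ⟨u, huS⟩
  omega

namespace IsMatching

variable {V W : Type*} {M : Finset (V × W)}

theorem card_image_fst [DecidableEq V] (hM : IsMatching M) : (M.image Prod.fst).card = M.card :=
  Finset.card_image_of_injOn fun e he f hf => hM.1 e he f hf

theorem card_image_snd [DecidableEq W] (hM : IsMatching M) : (M.image Prod.snd).card = M.card :=
  Finset.card_image_of_injOn fun e he f hf => hM.2 e he f hf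

theorem image_snd_eq_erase [DecidableEq V] [DecidableEq W] [Fintype V] [Fintype W]
    (hM : IsMatching M)
    (hsat : M.image Prod.fst = Finset.univ) (hcard : Fintype.card W = Fintype.card V + 1)
    {w : W} (hw : ∀ e ∈ M, e.2 ≠ w) : M.image Prod.snd = Finset.univ.erase w := by
  refine Finset.eq_of_subset_of_card_le (fun z hz => ?_) ?_
  · obtain ⟨e, he, rfl⟩ := Finset.mem_image.mp hz
    exact Finset.mem_erase.mpr ⟨hw e he, Finset.mem_univ _⟩
  · rw [hM.card_image_snd, ← hM.card_image_fst, hsat, Finset.card_erase_of_mem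
      (Finset.mem_univ w), Finset.card_univ, Finset.card_univ, hcard, Nat.add_sub_cancel]

end IsMatching

theorem stmt2_general {X : Type*} [Fintype X] [DecidableEq X]
    (M : Finset (X × (X ⊕ Unit)))
    (hM : IsMatching M)
    (hsat : M.image Prod.fst = Finset.univ)
    (w : X ⊕ Unit) (hw : ∀ e ∈ M, (e : X × (X ⊕ Unit)).2 ≠ w) :
    Relation.ReflTransGen
      (fun z y => ∃ x : X, y = Sum.inl x ∧ (x, z) ∈ M) (Sum.inr ()) w := by
  have hcover : ∀ z ≠ w, ∃ x, (x, z) ∈ M := fun z hz => by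
    have : z ∈ M.image Prod.snd := by
      rw [hM.image_snd_eq_erase hsat (by simp) hw]
      exact Finset.mem_erase.mpr ⟨hz, Finset.mem_univ z⟩
    obtain ⟨e, he, rfl⟩ := Finset.mem_image.mp this
    exact ⟨e.1, he⟩
  refine Relation.reflTransGen_of_leftUnique (fun z hz => ?_) ?_
  · obtain ⟨x, hx⟩ := hcover z hz
    exact ⟨Sum.inl x, Sum.inl_ne_inr, x, rfl, hx⟩
  · rintro z z' _ ⟨x, rfl, hx⟩ ⟨x', hxx', hx'⟩
    cases Sum.inl_injective hxx'
    exact congrArg Prod.snd (hM.1 _ hx _ hx' rfl)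

/-- Digraph `D` on `X ⊕ {u}`; bipartite graph has left vertices `X'` (a copy of `X`), right
vertices `X ⊕ {u}` and an edge `(y', z)` exactly when `D` has an edge `z → y`.  If `M` is a
perfect matching saturating the left side containing an edge `(p', u)`, then the unique
right vertex uncovered by `M` is reachable from `u` along directed edges whose reversals are
edges of `M`. -/
theorem stmt2 {X : Type*} [Fintype X] [DecidableEq X]
    (D : (X ⊕ Unit) → (X ⊕ Unit) → Prop)
    (M : Finset (X × (X ⊕ Unit)))
    (hedge : ∀ e ∈ M, D (e : X × (X ⊕ Unit)).2 (Sum.inl (e : X × (X ⊕ Unit)).1))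
    (hM : IsMatching M)
    (hsat : M.image Prod.fst = Finset.univ)
    (p : X) (hp : (p, Sum.inr ()) ∈ M)
    (w : X ⊕ Unit) (hw : ∀ e ∈ M, (e : X × (X ⊕ Unit)).2 ≠ w) :
    Relation.ReflTransGen
      (fun z y => ∃ x : X, y = Sum.inl x ∧ (x, z) ∈ M) (Sum.inr ()) w :=
  stmt2_general M hM hsat w hw
end

section
/- Let D be a finite digraph that is the disjoint union of k digraphs D₁,…,D_k with an input vertex u, and suppose at least one vertex v₀ is reachable from u. Let N₁,…,N_q be the non-top-linked SCCs of the D_i's not reachable from u, and assume every pair of vertices in distinct subsystems may be joined by an added interconnection edge, and each N_j lies in a subsystem different from that of some reachable vertex. If additionally every non-top-linked SCC of each D_i either is one of the N_j or is reachable from u, then adding exactly q interconnection edges, one from a reachable vertex into each N_j (processed in a suitable order), makes every vertex of D reachable from u. -/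
/-!
Every vertex of a finite digraph is reached from a source SCC (one without incoming edges),
namely the SCC of a minimal ancestor for strict reachability. A source SCC is either already
reachable from the input or is some `N j`; in the latter case one edge from a reachable vertex of
another block into a chosen point of `N j` makes all of `N j`, and everything below it, reachable.
The `N j` are distinct SCCs, hence disjoint, so the `q` edges are distinct.
-/

/-- A strongly connected component: a nonempty, mutually reachable, maximal vertex set. -/
def IsSCC {V : Type*} (D : V → V → Prop) (s : Set V) : Prop :=
  s.Nonempty ∧ (∀ v ∈ s, ∀ w ∈ s, Relation.ReflTransGen D v w) ∧
    ∀ t : Set V, s ⊆ t → (∀ v ∈ t, ∀ w ∈ t, Relation.ReflTransGen D v w) → t = s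

open Relation

namespace IsSCC

variable {V : Type*} {D : V → V → Prop} {s t : Set V}

theorem reflTransGen (hs : IsSCC D s) {v w : V} (hv : v ∈ s) (hw : w ∈ s) :
    ReflTransGen D v w :=
  hs.2.1 v hv w hw

theorem eq_of_mem_of_mem (hs : IsSCC D s) (ht : IsSCC D t) {p : V} (hps : p ∈ s)
    (hpt : p ∈ t) : s = t := by
  have to_p : ∀ v ∈ s ∪ t, ReflTransGen D v p := by
    rintro v (hv | hv)
    exacts [hs.reflTransGen hv hps, ht.reflTransGen hv hpt]
  have from_p : ∀ w ∈ s ∪ t, ReflTransGen D p w := by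
    rintro w (hw | hw)
    exacts [hs.reflTransGen hps hw, ht.reflTransGen hpt hw]
  have hmut : ∀ v ∈ s ∪ t, ∀ w ∈ s ∪ t, ReflTransGen D v w :=
    fun v hv w hw => (to_p v hv).trans (from_p w hw)
  exact (hs.2.2 _ Set.subset_union_left hmut).symm.trans (ht.2.2 _ Set.subset_union_right hmut)

end IsSCC

section SourceSCC

variable {V : Type*}

theorem isSCC_setOf_reflTransGen_and_reflTransGen (D : V → V → Prop) (y : V) :
    IsSCC D {z | ReflTransGen D y z ∧ ReflTransGen D z y} := by
  refine ⟨⟨y, .refl, .refl⟩, fun v hv w hw => hv.2.trans hw.1, fun t hst hmut => ?_⟩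
  have hy : y ∈ t := hst ⟨.refl, .refl⟩
  exact Set.Subset.antisymm (fun w hw => ⟨hmut y hy w hw, hmut w hw y hy⟩) hst

theorem exists_isSCC_source_reflTransGen [Finite V] (D : V → V → Prop) (x : V) :
    ∃ s, IsSCC D s ∧ (∀ a ∉ s, ∀ z ∈ s, ¬ D a z) ∧ ∃ z ∈ s, ReflTransGen D z x := by
  let r : V → V → Prop := fun a c => ReflTransGen D a c ∧ ¬ ReflTransGen D c a
  have : IsTrans V r :=
    ⟨fun _ _ _ hab hbc => ⟨hab.1.trans hbc.1, fun h => hab.2 (hbc.1.trans h)⟩⟩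
  have : Std.Irrefl r := ⟨fun _ h => h.2 h.1⟩
  obtain ⟨y, hyx, hymin⟩ :=
    (Finite.wellFounded_of_trans_of_irrefl r).has_min {z | ReflTransGen D z x} ⟨x, .refl⟩
  refine ⟨_, isSCC_setOf_reflTransGen_and_reflTransGen D y, ?_, y, ⟨.refl, .refl⟩, hyx⟩
  rintro a ha z ⟨-, hzy⟩ haz
  have hay : ReflTransGen D a y := (ReflTransGen.single haz).trans hzy
  exact ha ⟨not_not.1 fun hya => hymin a (hay.trans hyx) ⟨hay, hya⟩, hay⟩

theorem exists_reflTransGen_of_forall_isSCC_source [Finite V] {D D' : V → V → Prop}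
    (hDD' : ∀ a c, D a c → D' a c) {U : Set V}
    (hsrc : ∀ s, IsSCC D s → (∀ a ∉ s, ∀ z ∈ s, ¬ D a z) →
      ∃ y ∈ s, ∃ t ∈ U, ReflTransGen D' t y)
    (x : V) : ∃ t ∈ U, ReflTransGen D' t x := by
  obtain ⟨s, hs, hs_src, z, hzs, hzx⟩ := exists_isSCC_source_reflTransGen D x
  obtain ⟨y, hys, t, htU, hty⟩ := hsrc s hs hs_src
  exact ⟨t, htU, hty.trans (ReflTransGen.mono hDD' _ _ ((hs.reflTransGen hys hzs).trans hzx))⟩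

end SourceSCC

theorem stmt13_general {X : Type*} [Fintype X] {k q : ℕ}
    (b : X → Fin k) (Dx : X → X → Prop)
    (U : Set X)
    (N : Fin q → Set X)
    (hSCC : ∀ j, IsSCC Dx (N j))
    (hinj : Function.Injective N)
    (hcross : ∀ j, ∃ v : X, (∃ s ∈ U, Relation.ReflTransGen Dx s v) ∧
      ∀ x ∈ N j, b v ≠ b x)
    (hcomplete : ∀ s : Set X, IsSCC Dx s → (∀ x ∉ s, ∀ y ∈ s, ¬ Dx x y) →
      (∃ j, s = N j) ∨ ∃ y ∈ s, ∃ t ∈ U, Relation.ReflTransGen Dx t y) :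
    ∃ I : Finset (X × X),
      (∀ e ∈ I, b (e : X × X).1 ≠ b (e : X × X).2) ∧ I.card = q ∧
      ∀ x : X, ∃ s ∈ U,
        Relation.ReflTransGen (fun a c => Dx a c ∨ (a, c) ∈ I) s x := by
  classical
  choose v hv_reach hv_block using hcross
  choose n hn using fun j => (hSCC j).1
  let I := Finset.univ.image fun j => (v j, n j)
  have hI : ∀ j, (v j, n j) ∈ I := fun j => Finset.mem_image_of_mem _ (Finset.mem_univ j)
  have hn_inj : Function.Injective n := fun i j hij =>
    hinj ((hSCC i).eq_of_mem_of_mem (hSCC j) (hn i) (hij ▸ hn j))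
  refine ⟨I, ?_, ?_, exists_reflTransGen_of_forall_isSCC_source (fun _ _ => Or.inl)
    fun s hs hs_src => ?_⟩
  · simp only [I, Finset.mem_image, Finset.mem_univ, true_and]
    rintro _ ⟨j, rfl⟩
    exact hv_block j (n j) (hn j)
  · rw [Finset.card_image_of_injective _ fun i j hij => hn_inj (congrArg Prod.snd hij),
      Finset.card_univ, Fintype.card_fin]
  · rcases hcomplete s hs hs_src with ⟨j, rfl⟩ | ⟨y, hys, t, htU, hty⟩
    · obtain ⟨t, htU, htv⟩ := hv_reach j
      exact ⟨n j, hn j, t, htU,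
        (ReflTransGen.mono (fun _ _ => Or.inl) _ _ htv).tail (Or.inr (hI j))⟩
    · exact ⟨y, hys, t, htU, ReflTransGen.mono (fun _ _ => Or.inl) _ _ hty⟩

/-- Sufficiency: disjoint union of `k` digraphs (blocks `b`, edges of `Dx` within blocks)
with input heads `U` and some reachable vertex `v₀`.  If `N 0, …, N (q-1)` are the distinct
non-top-linked SCCs not reachable from the input, each lying in a block different from
that of some reachable vertex, and every other non-top-linked SCC is reachable, then
exactly `q` interconnection edges suffice to make every vertex reachable. -/
theorem stmt13 {X : Type*} [Fintype X] [DecidableEq X] {k q : ℕ}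
    (b : X → Fin k) (Dx : X → X → Prop)
    (hblock : ∀ x y, Dx x y → b x = b y)
    (U : Set X)
    (v₀ : X) (hv₀ : ∃ s ∈ U, Relation.ReflTransGen Dx s v₀)
    (N : Fin q → Set X)
    (hSCC : ∀ j, IsSCC Dx (N j))
    (hNTL : ∀ j, ∀ x ∉ N j, ∀ y ∈ N j, ¬ Dx x y)
    (hinacc : ∀ j, ∀ y ∈ N j, ¬ ∃ s ∈ U, Relation.ReflTransGen Dx s y)
    (hinj : Function.Injective N)
    (hcross : ∀ j, ∃ v : X, (∃ s ∈ U, Relation.ReflTransGen Dx s v) ∧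
      ∀ x ∈ N j, b v ≠ b x)
    (hcomplete : ∀ s : Set X, IsSCC Dx s → (∀ x ∉ s, ∀ y ∈ s, ¬ Dx x y) →
      (∃ j, s = N j) ∨ ∃ y ∈ s, ∃ t ∈ U, Relation.ReflTransGen Dx t y) :
    ∃ I : Finset (X × X),
      (∀ e ∈ I, b (e : X × X).1 ≠ b (e : X × X).2) ∧ I.card = q ∧
      ∀ x : X, ∃ s ∈ U,
        Relation.ReflTransGen (fun a c => Dx a c ∨ (a, c) ∈ I) s x :=
  stmt13_general b Dx U N hSCC hinj hcross hcomplete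
end

section
/- Let D_s be a fixed digraph on n_s vertices whose bipartite graph B(Ā_s) has a perfect matching (structurally cyclic subsystem). Take k disjoint copies of D_s plus an input vertex u with given edges into the copies, and let q be the number of non-top-linked SCCs of the copies not reachable from u. Assume arbitrary interconnection edges between distinct copies are allowed and each inaccessible non-top-linked SCC lies in a copy different from some copy containing a reachable vertex, with at least one vertex reachable from u. Then the minimum number of interconnection edges whose addition makes (i) every vertex reachable from u and (ii) the bipartite graph of the composite system with the input column have a perfect matching, is exactly q. -/
/-- Within-copy edges of the composite of `k` copies of `Ds`. -/
def blockRel {k ns : ℕ} (Ds : Fin ns → Fin ns → Prop) :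
    (Fin k × Fin ns) → (Fin k × Fin ns) → Prop :=
  fun p q => p.1 = q.1 ∧ Ds p.2 q.2

/-!
A source SCC of the composite graph (one without incoming edges) can only be entered through an
added edge, and distinct SCCs are disjoint, so each of the `q` inaccessible source SCCs needs its
own interconnection edge. Conversely, one edge from a reachable vertex of another copy into each
of them makes everything reachable, since every vertex lies below some source SCC. The matching
condition costs nothing: the perfect matchings of the copies, placed side by side, already match
every state.
-/

open Relation Function

section SCC

variable {V : Type*} {R : V → V → Prop}

/-- The paper's "non-top-linked" sets. -/
def NoEdgeInto (R : V → V → Prop) (s : Set V) : Prop :=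
  ∀ a ∉ s, ∀ b ∈ s, ¬ R a b

def sccOf (R : V → V → Prop) (x : V) : Set V :=
  {y | ReflTransGen R x y ∧ ReflTransGen R y x}

lemma mem_sccOf (x : V) : x ∈ sccOf R x :=
  ⟨.refl, .refl⟩

lemma isSCC_sccOf (x : V) : IsSCC R (sccOf R x) := by
  refine ⟨⟨x, mem_sccOf x⟩, fun v hv w hw => hv.2.trans hw.1, fun t hst ht => ?_⟩
  have hxt : x ∈ t := hst (mem_sccOf x)
  exact Set.Subset.antisymm (fun z hz => ⟨ht x hxt z hz, ht z hz x hxt⟩) hst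

lemma IsSCC.eq_of_mem {s t : Set V} (hs : IsSCC R s) (ht : IsSCC R t) {x : V}
    (hxs : x ∈ s) (hxt : x ∈ t) : s = t := by
  have hmut : ∀ v ∈ s ∪ t, ∀ w ∈ s ∪ t, ReflTransGen R v w := by
    rintro v (hv | hv) w (hw | hw)
    · exact hs.2.1 v hv w hw
    · exact (hs.2.1 v hv x hxs).trans (ht.2.1 x hxt w hw)
    · exact (ht.2.1 v hv x hxt).trans (hs.2.1 x hxs w hw)
    · exact ht.2.1 v hv w hw
  exact (hs.2.2 _ Set.subset_union_left hmut).symm.trans (ht.2.2 _ Set.subset_union_right hmut)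

lemma injective_of_mem_isSCC {ι : Type*} {N : ι → Set V} (hSCC : ∀ j, IsSCC R (N j))
    (hinj : Injective N) {w : ι → V} (hw : ∀ j, w j ∈ N j) : Injective w :=
  fun j j' h => hinj <| (hSCC j).eq_of_mem (hSCC j') (hw j) (h ▸ hw j')

lemma exists_isSCC_noEdgeInto_reflTransGen [Finite V] (R : V → V → Prop) (x : V) :
    ∃ s, IsSCC R s ∧ NoEdgeInto R s ∧ ∃ y ∈ s, ReflTransGen R y x := by
  induction x using (measure fun x => {y | ReflTransGen R y x}.ncard).wf.induction with
  | _ x ih =>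
  by_cases hsrc : NoEdgeInto R (sccOf R x)
  · exact ⟨_, isSCC_sccOf x, hsrc, x, mem_sccOf x, .refl⟩
  simp only [NoEdgeInto, not_forall, not_not] at hsrc
  obtain ⟨a, ha, b, hb, hab⟩ := hsrc
  have hax : ReflTransGen R a x := (ReflTransGen.single hab).trans hb.2
  -- the ancestors of `a` are strictly fewer than those of `x`, as `x` is not among them
  have hfewer : {y | ReflTransGen R y a}.ncard < {y | ReflTransGen R y x}.ncard :=
    Set.ncard_lt_ncard ⟨fun y hy => hy.trans hax, fun hsub => ha ⟨hsub .refl, hax⟩⟩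
  obtain ⟨s, hs, hsrc, y, hy, hya⟩ := ih a hfewer
  exact ⟨s, hs, hsrc, y, hy, hya.trans hax⟩

lemma NoEdgeInto.exists_of_reflTransGen_sup {T : V → V → Prop} {s : Set V}
    (hs : NoEdgeInto R s) {a b : V} (hab : ReflTransGen (fun a c => R a c ∨ T a c) a b)
    (ha : a ∉ s) (hb : b ∈ s) : ∃ c, ∃ d ∈ s, T c d := by
  induction hab using ReflTransGen.head_induction_on with
  | refl => exact absurd hb ha
  | @head a c hac _ ih =>
    by_cases hc : c ∈ s
    · exact hac.elim (fun hR => absurd hR (hs a ha c hc)) fun hT => ⟨a, c, hc, hT⟩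
    · exact ih hc

lemma reflTransGen_of_forall_noEdgeInto [Finite V] {T : V → V → Prop} {U : Set V}
    (hsrc : ∀ s, IsSCC R s → NoEdgeInto R s →
      ∃ y ∈ s, ∃ t ∈ U, ReflTransGen (fun a c => R a c ∨ T a c) t y)
    (x : V) : ∃ t ∈ U, ReflTransGen (fun a c => R a c ∨ T a c) t x := by
  obtain ⟨s, hs, hsEdge, y, hy, hyx⟩ := exists_isSCC_noEdgeInto_reflTransGen R x
  obtain ⟨y', hy', t, ht, hty'⟩ := hsrc s hs hsEdge
  have lift : ∀ {a b}, ReflTransGen R a b → ReflTransGen (fun a c => R a c ∨ T a c) a b :=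
    ReflTransGen.mono (fun _ _ => Or.inl) _ _
  exact ⟨t, ht, hty'.trans ((lift (hs.2.1 y' hy' y hy)).trans (lift hyx))⟩

lemma card_le_card_of_forall_reflTransGen {ι : Type*} [Fintype ι] {U : Set V}
    {N : ι → Set V} (hSCC : ∀ j, IsSCC R (N j)) (hinj : Injective N)
    (hsrc : ∀ j, NoEdgeInto R (N j)) (hU : ∀ j, ∀ t ∈ U, t ∉ N j) (I : Finset (V × V))
    (hreach : ∀ x, ∃ t ∈ U, ReflTransGen (fun a c => R a c ∨ (a, c) ∈ I) t x) :
    Fintype.card ι ≤ I.card := by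
  have hentry : ∀ j, ∃ e ∈ I, e.2 ∈ N j := by
    intro j
    obtain ⟨y, hy⟩ := (hSCC j).1
    obtain ⟨t, ht, hty⟩ := hreach y
    obtain ⟨c, d, hd, hcd⟩ := (hsrc j).exists_of_reflTransGen_sup hty (hU j t ht) hy
    exact ⟨(c, d), hcd, hd⟩
  choose e he heN using hentry
  have he_inj : Injective e :=
    .of_comp (f := Prod.snd) (injective_of_mem_isSCC hSCC hinj heN)
  simpa only [Finset.card_univ] using
    Finset.card_le_card_of_injOn (s := .univ) e (fun j _ => he j) he_inj.injOn

end SCC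

theorem stmt16_general {k ns q : ℕ} (Ds : Fin ns → Fin ns → Prop)
    (hpm : ∃ f : Fin ns → Fin ns, Function.Injective f ∧ ∀ s, Ds (f s) s)
    (U : Set (Fin k × Fin ns))
    (N : Fin q → Set (Fin k × Fin ns))
    (hSCC : ∀ j, IsSCC (blockRel Ds) (N j))
    (hNTL : ∀ j, ∀ x ∉ N j, ∀ y ∈ N j, ¬ blockRel Ds x y)
    (hinacc : ∀ j, ∀ y ∈ N j, ¬ ∃ s ∈ U, Relation.ReflTransGen (blockRel Ds) s y)
    (hinj : Function.Injective N)
    (hcross : ∀ j, ∃ v : Fin k × Fin ns,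
      (∃ s ∈ U, Relation.ReflTransGen (blockRel Ds) s v) ∧ ∀ x ∈ N j, v.1 ≠ x.1)
    (hcomplete : ∀ s : Set (Fin k × Fin ns), IsSCC (blockRel Ds) s →
      (∀ x ∉ s, ∀ y ∈ s, ¬ blockRel Ds x y) →
      (∃ j, s = N j) ∨ ∃ y ∈ s, ∃ t ∈ U, Relation.ReflTransGen (blockRel Ds) t y) :
    IsLeast {n : ℕ |
      ∃ I : Finset ((Fin k × Fin ns) × (Fin k × Fin ns)),
        (∀ e ∈ I, (e : (Fin k × Fin ns) × (Fin k × Fin ns)).1.1 ≠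
          (e : (Fin k × Fin ns) × (Fin k × Fin ns)).2.1) ∧
        I.card = n ∧
        (∀ x : Fin k × Fin ns, ∃ s ∈ U,
          Relation.ReflTransGen (fun a c => blockRel Ds a c ∨ (a, c) ∈ I) s x) ∧
        (∃ g : Fin k × Fin ns → (Fin k × Fin ns) ⊕ Unit, Function.Injective g ∧
          ∀ x, (∀ y, g x = Sum.inl y → (blockRel Ds y x ∨ (y, x) ∈ I)) ∧
            (g x = Sum.inr () → x ∈ U))} q := by
  classical
  refine ⟨?_, fun n ⟨I, _, hcard, hreach, _⟩ => ?_⟩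
  · obtain ⟨f, hf_inj, hf⟩ := hpm
    choose v hv hvcross using hcross
    choose w hw using fun j => (hSCC j).1
    let I := Finset.univ.image fun j => (v j, w j)
    have hedge_inj : Injective fun j => (v j, w j) :=
      .of_comp (f := Prod.snd) (injective_of_mem_isSCC hSCC hinj hw)
    have hvI : ∀ j, (v j, w j) ∈ I := fun j => Finset.mem_image_of_mem _ (Finset.mem_univ j)
    have hlift : ∀ {a b}, ReflTransGen (blockRel Ds) a b →
        ReflTransGen (fun a c => blockRel Ds a c ∨ (a, c) ∈ I) a b :=
      ReflTransGen.mono (fun _ _ => Or.inl) _ _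
    refine ⟨I, ?_, ?_, reflTransGen_of_forall_noEdgeInto fun s hs hsrc => ?_, ?_⟩
    · simp only [I, Finset.mem_image, Finset.mem_univ, true_and]
      rintro _ ⟨j, rfl⟩
      exact hvcross j (w j) (hw j)
    · rw [Finset.card_image_of_injective _ hedge_inj, Finset.card_univ, Fintype.card_fin]
    · rcases hcomplete s hs hsrc with ⟨j, rfl⟩ | ⟨y, hy, t, ht, hty⟩
      · obtain ⟨t, ht, htv⟩ := hv j
        exact ⟨w j, hw j, t, ht, (hlift htv).tail (Or.inr (hvI j))⟩
      · exact ⟨y, hy, t, ht, hlift hty⟩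
    · refine ⟨Sum.inl ∘ Prod.map id f, Sum.inl_injective.comp (injective_id.prodMap hf_inj),
        fun x => ⟨?_, by simp⟩⟩
      rintro y ⟨⟩
      exact Or.inl ⟨rfl, hf x.2⟩
  · have hU : ∀ j, ∀ t ∈ U, t ∉ N j := fun j t ht htN => hinacc j t htN ⟨t, ht, .refl⟩
    simpa only [Fintype.card_fin, hcard] using card_le_card_of_forall_reflTransGen hSCC hinj hNTL hU I hreach

/-- Structurally cyclic case: each copy's bipartite graph has a perfect matching (`hpm`).
With `q` distinct inaccessible non-top-linked SCCs (each in a copy different from that of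
some reachable vertex, all other non-top-linked SCCs reachable), the minimum number of
interconnection edges achieving (i) reachability of every state from the input and
(ii) a perfect matching of the composite bipartite graph with the input column,
is exactly `q`. -/
theorem stmt16 {k ns q : ℕ} (Ds : Fin ns → Fin ns → Prop)
    (hpm : ∃ f : Fin ns → Fin ns, Function.Injective f ∧ ∀ s, Ds (f s) s)
    (U : Set (Fin k × Fin ns))
    (v₀ : Fin k × Fin ns)
    (hv₀ : ∃ s ∈ U, Relation.ReflTransGen (blockRel Ds) s v₀)
    (N : Fin q → Set (Fin k × Fin ns))
    (hSCC : ∀ j, IsSCC (blockRel Ds) (N j))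
    (hNTL : ∀ j, ∀ x ∉ N j, ∀ y ∈ N j, ¬ blockRel Ds x y)
    (hinacc : ∀ j, ∀ y ∈ N j, ¬ ∃ s ∈ U, Relation.ReflTransGen (blockRel Ds) s y)
    (hinj : Function.Injective N)
    (hcross : ∀ j, ∃ v : Fin k × Fin ns,
      (∃ s ∈ U, Relation.ReflTransGen (blockRel Ds) s v) ∧ ∀ x ∈ N j, v.1 ≠ x.1)
    (hcomplete : ∀ s : Set (Fin k × Fin ns), IsSCC (blockRel Ds) s →
      (∀ x ∉ s, ∀ y ∈ s, ¬ blockRel Ds x y) →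
      (∃ j, s = N j) ∨ ∃ y ∈ s, ∃ t ∈ U, Relation.ReflTransGen (blockRel Ds) t y) :
    IsLeast {n : ℕ |
      ∃ I : Finset ((Fin k × Fin ns) × (Fin k × Fin ns)),
        (∀ e ∈ I, (e : (Fin k × Fin ns) × (Fin k × Fin ns)).1.1 ≠
          (e : (Fin k × Fin ns) × (Fin k × Fin ns)).2.1) ∧
        I.card = n ∧
        (∀ x : Fin k × Fin ns, ∃ s ∈ U,
          Relation.ReflTransGen (fun a c => blockRel Ds a c ∨ (a, c) ∈ I) s x) ∧
        (∃ g : Fin k × Fin ns → (Fin k × Fin ns) ⊕ Unit, Function.Injective g ∧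
          ∀ x, (∀ y, g x = Sum.inl y → (blockRel Ds y x ∨ (y, x) ∈ I)) ∧
            (g x = Sum.inr () → x ∈ U))} q :=
  stmt16_general Ds hpm U N hSCC hNTL hinacc hinj hcross hcomplete
end
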